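/- Every partial ordered action α obtained as a standard restriction of an ordered global action β of an ordered groupoid G on a ring B to an ideal A is strong: for all g ∈ G and identities e ≤ r(g), one has A_{(e|g)} = A_e ∩ A_g. -/
import Mathlib


universe u v w

/-- An ordered groupoid: a set with a partial multiplication (given by a total
function `mul` together with a definedness predicate `comp`), inversion, and a
compatible partial order with unique restrictions and corestrictions
(conditions (OG1)-(OG3*)). Identities are the elements `e` with `e⁻¹e = e`;
`d g = g⁻¹g`, `r g = gg⁻¹`. -/
structure OrderedGroupoid (G : Type u) [PartialOrder G] where
  mul : G → G → G
  inv : G → G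
  comp : G → G → Prop
  comp_inv_self : ∀ g, comp (inv g) g
  comp_self_inv : ∀ g, comp g (inv g)
  comp_iff : ∀ g h, comp g h ↔ mul (inv g) g = mul h (inv h)
  assoc : ∀ g h k, comp g h → comp h k → mul (mul g h) k = mul g (mul h k)
  comp_mul_left : ∀ g h k, comp g h → comp h k → comp (mul g h) k
  comp_mul_right : ∀ g h k, comp g h → comp h k → comp g (mul h k)
  id_left : ∀ g, mul (mul g (inv g)) g = g
  id_right : ∀ g, mul g (mul (inv g) g) = g
  inv_inv : ∀ g, inv (inv g) = g
  inv_mul : ∀ g h, comp g h → inv (mul g h) = mul (inv h) (inv g)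
  /-- (OG1) -/
  inv_le_inv : ∀ g h, g ≤ h → inv g ≤ inv h
  /-- (OG2) -/
  mul_le_mul : ∀ g h k l, g ≤ h → k ≤ l → comp g k → comp h l → mul g k ≤ mul h l
  /-- restriction `(g|e)` -/
  rest : G → G → G
  rest_le : ∀ g e, mul (inv e) e = e → e ≤ mul (inv g) g → rest g e ≤ g
  rest_d : ∀ g e, mul (inv e) e = e → e ≤ mul (inv g) g →
    mul (inv (rest g e)) (rest g e) = e
  rest_unique : ∀ g e k, mul (inv e) e = e → e ≤ mul (inv g) g → k ≤ g →
    mul (inv k) k = e → k = rest g e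
  /-- corestriction `(e|g)` -/
  corest : G → G → G
  corest_le : ∀ e g, mul (inv e) e = e → e ≤ mul g (inv g) → corest e g ≤ g
  corest_r : ∀ e g, mul (inv e) e = e → e ≤ mul g (inv g) →
    mul (corest e g) (inv (corest e g)) = e
  corest_unique : ∀ e g k, mul (inv e) e = e → e ≤ mul g (inv g) → k ≤ g →
    mul k (inv k) = e → k = corest e g

namespace OrderedGroupoid

variable {G : Type u} [PartialOrder G]

/-- the domain identity `d g = g⁻¹ g` -/
def d (O : OrderedGroupoid G) (g : G) : G := O.mul (O.inv g) g

/-- the range identity `r g = g g⁻¹` -/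
def r (O : OrderedGroupoid G) (g : G) : G := O.mul g (O.inv g)

/-- `e` is an identity of the groupoid -/
def IsId (O : OrderedGroupoid G) (e : G) : Prop := O.d e = e

/-- `m` is the meet of the identities `e` and `f` in the order on identities. -/
def IsMeet (O : OrderedGroupoid G) (e f m : G) : Prop :=
  O.IsId m ∧ m ≤ e ∧ m ≤ f ∧ ∀ w, O.IsId w → w ≤ e → w ≤ f → w ≤ m

/-- the pseudoproduct `g ∗ h = (g | d g ∧ r h)·(d g ∧ r h | h)`, given a witness `m`
for the meet `d g ∧ r h`. -/
def pseudo (O : OrderedGroupoid G) (g h m : G) : G :=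
  O.mul (O.rest g m) (O.corest m h)

/-- `G` is inductive: its identities form a meet semilattice. -/
def Inductive (O : OrderedGroupoid G) : Prop :=
  ∀ e f, O.IsId e → O.IsId f → ∃ m, O.IsMeet e f m

/-- `G` is pseudoassociative: `(g∗h)∗k` is defined iff `g∗(h∗k)` is. -/
def Pseudoassoc (O : OrderedGroupoid G) : Prop :=
  ∀ g h k,
    (∃ m1 m2, O.IsMeet (O.d g) (O.r h) m1 ∧
      O.IsMeet (O.d (O.pseudo g h m1)) (O.r k) m2) ↔
    (∃ m3 m4, O.IsMeet (O.d h) (O.r k) m3 ∧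
      O.IsMeet (O.d g) (O.r (O.pseudo h k m3)) m4)

end OrderedGroupoid

/-- `T` is a (two-sided) ideal of the subring with carrier `R`. -/
def IsIdealIn {A : Type v} [Ring A] (T R : Set A) : Prop :=
  T ⊆ R ∧ (0 : A) ∈ T ∧ (∀ a b, a ∈ T → b ∈ T → a + b ∈ T) ∧
    (∀ a, a ∈ T → -a ∈ T) ∧ ∀ x a, x ∈ R → a ∈ T → x * a ∈ T ∧ a * x ∈ T

/-- A partial ordered (P.O.) action `α = (A_g, α_g)` of an ordered groupoid `G` on
a ring `A`: ideals `A_{r g} ◁ A`, `A_g ◁ A_{r g}` and ring isomorphisms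
`α_g : A_{g⁻¹} → A_g` satisfying (P1)-(P3) and (PO). -/
structure POAction {G : Type u} [PartialOrder G] (O : OrderedGroupoid G)
    (A : Type v) [Ring A] where
  S : G → Set A
  act : G → A → A
  ideal_r : ∀ g, IsIdealIn (S (O.r g)) Set.univ
  ideal_g : ∀ g, IsIdealIn (S g) (S (O.r g))
  bijOn : ∀ g, Set.BijOn (act g) (S (O.inv g)) (S g)
  map_add : ∀ g a b, a ∈ S (O.inv g) → b ∈ S (O.inv g) →
    act g (a + b) = act g a + act g b
  map_mul : ∀ g a b, a ∈ S (O.inv g) → b ∈ S (O.inv g) →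
    act g (a * b) = act g a * act g b
  /-- (P1): `α_e = id` on `A_e` for identities -/
  p1_id : ∀ e, O.IsId e → ∀ a ∈ S e, act e a = a
  /-- (P1): `A = Σ_e A_e` -/
  p1_sum : AddSubgroup.closure {a : A | ∃ e, O.IsId e ∧ a ∈ S e} = ⊤
  /-- (P2) -/
  p2 : ∀ g h, O.comp g h → ∀ x, x ∈ S (O.inv g) → x ∈ S h →
    act (O.inv h) x ∈ S (O.inv (O.mul g h))
  /-- (P3) -/
  p3 : ∀ g h, O.comp g h → ∀ a, a ∈ S (O.inv h) → act h a ∈ S (O.inv g) →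
    act g (act h a) = act (O.mul g h) a
  /-- (PO) -/
  po_subset : ∀ g h, g ≤ h → S g ⊆ S h
  po_act : ∀ g h, g ≤ h → ∀ a ∈ S (O.inv g), act h a = act g a

namespace POAction

variable {G : Type u} [PartialOrder G] {O : OrderedGroupoid G}
variable {A : Type v} [Ring A]

/-- a global action: `A_g = A_{r g}`. -/
def IsGlobal (α : POAction O A) : Prop := ∀ g, α.S g = α.S (O.r g)

/-- a strong P.O. action: `A_{(e|g)} = A_e ∩ A_g` for identities `e ≤ r g`. -/
def IsStrong (α : POAction O A) : Prop :=
  ∀ g e, O.IsId e → e ≤ O.r g → α.S (O.corest e g) = α.S e ∩ α.S g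

end POAction

/-- the set `T` is generated, as an ideal, by a central idempotent. -/
def GenByCentralIdem {A : Type v} [Ring A] (T : Set A) : Prop :=
  ∃ u : A, (∀ x : A, u * x = x * u) ∧ u * u = u ∧ T = {a : A | u * a = a}

namespace POAction

variable {G : Type u} [PartialOrder G] {O : OrderedGroupoid G}
variable {A : Type v} [Ring A]

/-- `α` is unital: every `A_g` is generated by a central idempotent of `A`. -/
def IsUnital (α : POAction O A) : Prop := ∀ g, GenByCentralIdem (α.S g)

/-- `α` is preunital: every `A_e`, `e` an identity, is generated by a central
idempotent of `A`. -/
def Preunital (α : POAction O A) : Prop :=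
  ∀ e, O.IsId e → GenByCentralIdem (α.S e)

end POAction

/-- Equivalence of two P.O. actions of `G` (on rings `A` and `C`): a family of
ring isomorphisms `φ_e : A_e → C_e` with `φ_{r g}(A_g) = C_g` and
`φ_{r g} ∘ α_g = γ_g ∘ φ_{d g}` on `A_{g⁻¹}`. -/
def POAction.Equivalent {G : Type u} [PartialOrder G] {O : OrderedGroupoid G}
    {A : Type v} [Ring A] {C : Type w} [Ring C]
    (α : POAction O A) (γ : POAction O C) : Prop :=
  ∃ φ : G → A → C,
    (∀ e, O.IsId e → Set.BijOn (φ e) (α.S e) (γ.S e) ∧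
      ∀ a b, a ∈ α.S e → b ∈ α.S e →
        φ e (a + b) = φ e a + φ e b ∧ φ e (a * b) = φ e a * φ e b) ∧
    (∀ g, φ (O.r g) '' α.S g = γ.S g) ∧
    ∀ g a, a ∈ α.S (O.inv g) → φ (O.r g) (α.act g a) = γ.act g (φ (O.d g) a)

/-- An (ordered) globalization of a P.O. action `α` of `G` on `A`: an ordered
global action `β` of `G` on a ring `B` together with ring monomorphisms
`φ_e : A_e → B_e` satisfying conditions (i)-(iv). -/
structure Globalization {G : Type u} [PartialOrder G] (O : OrderedGroupoid G)
    {A : Type v} [Ring A] (α : POAction O A) where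
  B : Type v
  [ringB : Ring B]
  β : POAction O B
  global : β.IsGlobal
  φ : G → A → B
  φ_inj : ∀ e, O.IsId e → Set.InjOn (φ e) (α.S e)
  φ_hom : ∀ e, O.IsId e → ∀ a b, a ∈ α.S e → b ∈ α.S e →
    φ e (a + b) = φ e a + φ e b ∧ φ e (a * b) = φ e a * φ e b
  /-- (i): `φ_e(A_e)` is an ideal of `B_e` -/
  cond_i : ∀ e, O.IsId e → IsIdealIn (φ e '' α.S e) (β.S e)
  /-- (ii) -/
  cond_ii : ∀ g, φ (O.r g) '' α.S g =
    (φ (O.r g) '' α.S (O.r g)) ∩ (β.act g '' (φ (O.d g) '' α.S (O.d g)))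
  /-- (iii) -/
  cond_iii : ∀ g a, a ∈ α.S (O.inv g) →
    β.act g (φ (O.d g) a) = φ (O.r g) (α.act g a)
  /-- (iv): `B_g = Σ_{r h ≤ r g} β_h(φ_{d h}(A_{d h}))` -/
  cond_iv : ∀ g, β.S g = ↑(AddSubgroup.closure
    {b : B | ∃ h, O.r h ≤ O.r g ∧ ∃ a ∈ α.S (O.d h), b = β.act h (φ (O.d h) a)})

namespace Globalization

variable {G : Type u} [PartialOrder G] {O : OrderedGroupoid G}
variable {A : Type v} [Ring A] {α : POAction O A}

attribute [instance] Globalization.ringB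

/-- a minimal globalization: `B_g = Σ_{r h = r g} β_h(φ_{d h}(A_{d h}))`. -/
def IsMinimal (Γ : Globalization O α) : Prop :=
  ∀ g, Γ.β.S g = ↑(AddSubgroup.closure
    {b : Γ.B | ∃ h, O.r h = O.r g ∧ ∃ a ∈ α.S (O.d h), b = Γ.β.act h (Γ.φ (O.d h) a)})

/-- two globalizations are equivalent when the underlying global actions are
equivalent P.O. actions. -/
def Equiv (Γ Γ' : Globalization O α) : Prop := Γ.β.Equivalent Γ'.β

end Globalization

/-- The conditions (P1)-(P3) and (PO) for a family `(S g, act g)` to be a P.O.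
action of `O` on the subring of `B` with carrier `carrier`. -/
def IsPOActionOn {G : Type u} [PartialOrder G] (O : OrderedGroupoid G)
    {B : Type v} [Ring B] (carrier : Set B) (S : G → Set B) (act : G → B → B) :
    Prop :=
  (∀ g, IsIdealIn (S (O.r g)) carrier) ∧
  (∀ g, IsIdealIn (S g) (S (O.r g))) ∧
  (∀ g, Set.BijOn (act g) (S (O.inv g)) (S g)) ∧
  (∀ g a b, a ∈ S (O.inv g) → b ∈ S (O.inv g) →
    act g (a + b) = act g a + act g b ∧ act g (a * b) = act g a * act g b) ∧
  (∀ e, O.IsId e → ∀ a ∈ S e, act e a = a) ∧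
  (∀ a, a ∈ carrier → a ∈ AddSubgroup.closure {x : B | ∃ e, O.IsId e ∧ x ∈ S e}) ∧
  (∀ g h, O.comp g h → ∀ x, x ∈ S (O.inv g) → x ∈ S h →
    act (O.inv h) x ∈ S (O.inv (O.mul g h))) ∧
  (∀ g h, O.comp g h → ∀ a, a ∈ S (O.inv h) → act h a ∈ S (O.inv g) →
    act g (act h a) = act (O.mul g h) a) ∧
  (∀ g h, g ≤ h → S g ⊆ S h ∧ ∀ a ∈ S (O.inv g), act h a = act g a)

/-- The standard restriction of a global action `β` to an ideal `A`:
`A_e = A ∩ B_e`, `A_g = A_{r g} ∩ β_g(A_{d g})`, `α_g = β_g|_{A_{g⁻¹}}`. -/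
def stdRestSets {G : Type u} [PartialOrder G] (O : OrderedGroupoid G)
    {B : Type v} [Ring B] (β : POAction O B) (A : Set B) (g : G) : Set B :=
  (A ∩ β.S (O.r g)) ∩ β.act g '' (A ∩ β.S (O.d g))

namespace OrderedGroupoid

variable {G : Type u} [PartialOrder G] (O : OrderedGroupoid G)

theorem id_mul' {e : G} (h : O.IsId e) : O.mul (O.inv e) e = e := h

theorem inv_id {e : G} (h : O.IsId e) : O.inv e = e := by
  have h1 := O.inv_mul (O.inv e) e (O.comp_inv_self e)
  rw [O.inv_inv] at h1
  rw [id_mul' O h] at h1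
  exact h1

theorem r_id {e : G} (h : O.IsId e) : O.r e = e := by
  have h2 := O.id_right e
  rw [id_mul' O h] at h2
  unfold r
  rw [inv_id O h, h2]

theorem isId_r (g : G) : O.IsId (O.r g) := by
  have hc1 : O.comp (O.mul g (O.inv g)) g :=
    O.comp_mul_left g (O.inv g) g (O.comp_self_inv g) (O.comp_inv_self g)
  have ha := O.assoc (O.mul g (O.inv g)) g (O.inv g) hc1 (O.comp_self_inv g)
  rw [O.id_left g] at ha
  have hinv : O.inv (O.mul g (O.inv g)) = O.mul g (O.inv g) := by
    rw [O.inv_mul g (O.inv g) (O.comp_self_inv g), O.inv_inv]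
  show O.mul (O.inv (O.mul g (O.inv g))) (O.mul g (O.inv g)) = O.mul g (O.inv g)
  rw [hinv, ← ha]

theorem d_le_d {g h : G} (hle : g ≤ h) : O.d g ≤ O.d h :=
  O.mul_le_mul (O.inv g) (O.inv h) g h (O.inv_le_inv g h hle) hle
    (O.comp_inv_self g) (O.comp_inv_self h)

theorem r_inv (g : G) : O.r (O.inv g) = O.d g := by
  unfold r d; rw [O.inv_inv]

theorem isId_d (g : G) : O.IsId (O.d g) := by
  rw [← O.r_inv]; exact O.isId_r (O.inv g)

end OrderedGroupoid

/-- every standard restriction of an ordered global action to an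
ideal is strong: `A_{(e|g)} = A_e ∩ A_g` for all `g` and identities `e ≤ r g`. -/
theorem stmt5 {G : Type u} [PartialOrder G] (O : OrderedGroupoid G)
    {B : Type v} [Ring B] (β : POAction O B) (hglob : β.IsGlobal)
    (A : Set B) (hA : IsIdealIn A Set.univ) :
    ∀ g e, O.IsId e → e ≤ O.r g →
      stdRestSets O β A (O.corest e g) = stdRestSets O β A e ∩ stdRestSets O β A g := by
  intro g e he hle
  set k := O.corest e g with hkdef
  have hid : O.mul (O.inv e) e = e := he
  have hkle : k ≤ g := O.corest_le e g hid hle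
  have hrk' : O.r k = e := O.corest_r e g hid hle
  have hre : O.r e = e := O.r_id he
  have hde : O.d e = e := he
  have hdk : O.d k ≤ O.d g := O.d_le_d hkle
  -- set facts from globality
  have hSk : β.S k = β.S e := by rw [hglob k, hrk']
  have hSinvk : β.S (O.inv k) = β.S (O.d k) := by rw [hglob (O.inv k), O.r_inv]
  have hSinvg : β.S (O.inv g) = β.S (O.d g) := by rw [hglob (O.inv g), O.r_inv]
  have hSg : β.S g = β.S (O.r g) := hglob g
  -- A_e = A ∩ B_e
  have hAe : stdRestSets O β A e = A ∩ β.S e := by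
    unfold stdRestSets
    rw [hre, hde]
    have himg : β.act e '' (A ∩ β.S e) = A ∩ β.S e := by
      ext x
      constructor
      · rintro ⟨a, ⟨ha, hse⟩, rfl⟩
        rw [β.p1_id e he a hse]; exact ⟨ha, hse⟩
      · rintro ⟨ha, hse⟩
        exact ⟨x, ⟨ha, hse⟩, β.p1_id e he x hse⟩
    rw [himg, Set.inter_self]
  rw [hAe]
  unfold stdRestSets
  rw [hrk']
  ext x
  constructor
  · rintro ⟨⟨hxA, hxe⟩, a, ⟨haA, hadk⟩, rfl⟩
    have hainvk : a ∈ β.S (O.inv k) := by rw [hSinvk]; exact hadk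
    have hact : β.act g a = β.act k a := β.po_act k g hkle a hainvk
    refine ⟨⟨hxA, hxe⟩, ⟨hxA, β.po_subset e (O.r g) hle hxe⟩,
      ⟨a, ⟨haA, β.po_subset (O.d k) (O.d g) hdk hadk⟩, hact⟩⟩
  · rintro ⟨⟨hxA, hxe⟩, ⟨-, hxrg⟩, a, ⟨haA, hadg⟩, hxeq⟩
    refine ⟨⟨hxA, hxe⟩, ?_⟩
    have hxiik : x ∈ β.S (O.inv (O.inv k)) := by rw [O.inv_inv, hSk]; exact hxe
    have hxiig : x ∈ β.S (O.inv (O.inv g)) := by rw [O.inv_inv, hSg]; exact hxrg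
    have hb1 : β.act (O.inv k) x ∈ β.S (O.inv k) := (β.bijOn (O.inv k)).mapsTo hxiik
    have hbdk : β.act (O.inv k) x ∈ β.S (O.d k) := by rw [← hSinvk]; exact hb1
    have hbeq : β.act (O.inv g) x = β.act (O.inv k) x :=
      β.po_act (O.inv k) (O.inv g) (O.inv_le_inv k g hkle) x hxiik
    -- act (inv g) x = a
    have hainvg : a ∈ β.S (O.inv g) := by rw [hSinvg]; exact hadg
    have hxinvg : β.act g a ∈ β.S (O.inv (O.inv g)) := by rw [hxeq]; exact hxiig
    have h3 := β.p3 (O.inv g) g (O.comp_inv_self g) a hainvg hxinvg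
    have hda : β.act (O.d g) a = a := β.p1_id (O.d g) (O.isId_d g) a hadg
    have haeq : β.act (O.inv g) x = a := by
      rw [← hxeq, h3]; exact hda
    have hbA : β.act (O.inv k) x ∈ A := by rw [← hbeq, haeq]; exact haA
    have hkb : β.act k (β.act (O.inv k) x) = x := by
      have h4 := β.p3 k (O.inv k) (O.comp_self_inv k) x hxiik hb1
      rw [h4]
      have : O.mul k (O.inv k) = e := hrk'
      rw [this]
      exact β.p1_id e he x hxe
    exact ⟨β.act (O.inv k) x, ⟨hbA, hbdk⟩, hkb⟩
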